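/- The algebraic degree of the n-variable majority function Maj_n is 2^⌊log₂ n⌋. -/

import Mathlib

/-!
The ANF coefficient of a symmetric function `x ↦ g (wt x)` at `α` depends only on `k = wt α`: it is
`∑_{j ≤ k} C(k, j) g(j)`. For the majority function, with `t = ⌊n/2⌋`, this is the tail
`∑_{j > t} C(k, j)`, which by Pascal's rule is `C(k - 1, t)` mod 2. Let `m = 2^⌊log₂ n⌋`, so that
`t < m ≤ n < 2m`. Then `C(m - 1, t) ≡ (-1)^t` is odd, while for `m < k ≤ n` the Frobenius identity
`(1 + X)^m = 1 + X^m` over `𝔽₂` gives `C(m + s, t) ≡ C(s, t) = 0`, where `s = k - 1 - m < t`.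
Hence the ANF coefficients vanish above weight `m` but not at weight `m`.
-/

abbrev BF (n : ℕ) := (Fin n → ZMod 2) → ZMod 2

/-- Hamming weight of a vector in `F₂ⁿ`. -/
def wtv {n : ℕ} (x : Fin n → ZMod 2) : ℕ :=
  (Finset.univ.filter fun i => x i = 1).card

/-- ANF coefficient `a_α = ⊕_{z ≤ α} f(z)`. -/
def anf {n : ℕ} (f : BF n) (α : Fin n → ZMod 2) : ZMod 2 :=
  ∑ z ∈ Finset.univ.filter (fun z : Fin n → ZMod 2 => ∀ i, z i = 1 → α i = 1), f z

/-- Algebraic degree: the maximum weight of `α` with nonzero ANF coefficient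
(0 for the zero function). -/
def degBF {n : ℕ} (f : BF n) : ℕ :=
  (Finset.univ.filter fun α => anf f α ≠ 0).sup wtv

/-- Algebraic immunity: minimum degree of a nonzero annihilator of `f` or of `1 ⊕ f`. -/
noncomputable def AI {n : ℕ} (f : BF n) : ℕ :=
  sInf {d : ℕ | ∃ g : BF n, g ≠ 0 ∧ degBF g = d ∧
    ((∀ x, g x * f x = 0) ∨ (∀ x, g x * (1 + f x) = 0))}

/-- The n-variable majority function: 1 iff the weight exceeds ⌊n/2⌋. -/
def majF (n : ℕ) : BF n := fun x => if n / 2 < wtv x then 1 else 0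

open Finset Polynomial

namespace Nat

theorem cast_choose_pow_add_of_lt {p : ℕ} [Fact p.Prime] (L s : ℕ) {t : ℕ} (ht : t < p ^ L) :
    ((p ^ L + s).choose t : ZMod p) = s.choose t := by
  have hfrob : ((X + 1 : (ZMod p)[X]) ^ (p ^ L + s)) = X ^ p ^ L * (X + 1) ^ s + (X + 1) ^ s := by
    rw [pow_add, add_pow_char_pow, one_pow, add_mul, one_mul]
  have := congrArg (coeff · t) hfrob
  simpa [coeff_X_add_one_pow, coeff_X_pow_mul', not_le.mpr ht] using this

theorem cast_choose_pow_sub_one_of_lt {p : ℕ} [hp : Fact p.Prime] (L : ℕ) {t : ℕ}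
    (ht : t < p ^ L) :
    ((p ^ L - 1).choose t : ZMod p) = (-1) ^ t := by
  induction t with
  | zero => simp
  | succ t ih =>
    have hpascal := choose_succ_succ' (p ^ L - 1) t
    rw [Nat.sub_add_cancel (one_le_pow _ _ hp.out.pos)] at hpascal
    have hdvd : ((p ^ L).choose (t + 1) : ZMod p) = 0 :=
      (ZMod.natCast_eq_zero_iff _ _).mpr (hp.out.dvd_choose_pow (succ_ne_zero t) ht.ne)
    rw [hpascal, cast_add, ih (by omega)] at hdvd
    rw [pow_succ, eq_neg_of_add_eq_zero_right hdvd]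
    ring

end Nat

theorem sum_ite_lt_choose_succ_eq_choose (k t : ℕ) :
    (∑ j ∈ range (k + 2), if t < j then ((k + 1).choose j : ZMod 2) else 0) = k.choose t := by
  set f : ℕ → ZMod 2 := fun j => (k + 1).choose j
  have htotal : ∑ j ∈ range (k + 2), f j = 0 := by
    simp only [f, ← Nat.cast_sum, Nat.sum_range_choose, pow_succ, Nat.cast_mul, ZMod.natCast_self,
      mul_zero]
  -- mod 2 the alternating row sum of Pascal's triangle is a plain partial row sum
  have hhead : ∑ j ∈ range (t + 1), f j = k.choose t := by
    simpa [f] using congrArg (Int.castRingHom (ZMod 2)) Int.alternating_sum_range_choose_eq_choose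
  have hlow : ∑ j ∈ range (k + 2) with ¬ t < j, f j = ∑ j ∈ range (t + 1), f j := by
    refine sum_subset (fun j => by simp only [mem_filter, mem_range]; omega) fun j hj hj' => ?_
    simp only [mem_range, mem_filter, not_and, not_lt] at hj hj'
    simp only [f, Nat.choose_eq_zero_of_lt (by omega : k + 1 < j), Nat.cast_zero]
  rw [← sum_filter, ← hhead, ← hlow, ← CharTwo.add_eq_zero, sum_filter_add_sum_filter_not, htotal]

theorem ZMod.two_eq_zero_or_eq_one (a : ZMod 2) : a = 0 ∨ a = 1 := by
  revert a; decide

def indicatorVec {n : ℕ} (S : Finset (Fin n)) : Fin n → ZMod 2 := fun i => if i ∈ S then 1 else 0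

theorem filter_indicatorVec_eq_one {n : ℕ} (S : Finset (Fin n)) :
    univ.filter (indicatorVec S · = 1) = S := by
  ext i; by_cases hi : i ∈ S <;> simp [indicatorVec, hi]

theorem indicatorVec_filter_eq_one {n : ℕ} (x : Fin n → ZMod 2) :
    indicatorVec (univ.filter (x · = 1)) = x := by
  funext i
  rcases ZMod.two_eq_zero_or_eq_one (x i) with h | h <;> simp [indicatorVec, h]

theorem anf_comp_wtv {n : ℕ} (g : ℕ → ZMod 2) (α : Fin n → ZMod 2) :
    anf (fun x => g (wtv x)) α = ∑ j ∈ range (wtv α + 1), (wtv α).choose j • g j := by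
  rw [wtv, ← sum_powerset_apply_card, anf]
  refine sum_nbij' (fun z => univ.filter (z · = 1)) indicatorVec ?_ ?_
    (fun z _ => indicatorVec_filter_eq_one z) (fun S _ => filter_indicatorVec_eq_one S) fun _ _ => rfl
  · intro z hz
    simp only [mem_filter, mem_univ, true_and, mem_powerset, subset_iff] at hz ⊢
    exact hz
  · intro S hS
    simp only [mem_filter, mem_univ, true_and, mem_powerset, subset_iff] at hS ⊢
    intro i hi
    exact hS (by simpa [indicatorVec] using hi)

theorem exists_wtv_eq {n k : ℕ} (hk : k ≤ n) : ∃ x : Fin n → ZMod 2, wtv x = k := by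
  obtain ⟨S, -, hS⟩ := exists_subset_card_eq (s := (univ : Finset (Fin n))) (by simpa using hk)
  exact ⟨indicatorVec S, by rw [wtv, filter_indicatorVec_eq_one, hS]⟩

theorem anf_majF {n k : ℕ} {α : Fin n → ZMod 2} (hα : wtv α = k + 1) :
    anf (majF n) α = k.choose (n / 2) := by
  calc anf (majF n) α
      = ∑ j ∈ range (wtv α + 1), (wtv α).choose j • if n / 2 < j then (1 : ZMod 2) else 0 :=
        anf_comp_wtv (fun j => if n / 2 < j then 1 else 0) α
    _ = k.choose (n / 2) := by
        rw [hα, ← sum_ite_lt_choose_succ_eq_choose]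
        exact sum_congr rfl fun j _ => by split_ifs <;> simp

theorem degBF_eq_of_anf {n d : ℕ} {f : BF n} (hhigh : ∀ α, d < wtv α → anf f α = 0)
    (hlow : ∃ α, wtv α = d ∧ anf f α ≠ 0) : degBF f = d := by
  obtain ⟨α, rfl, hα⟩ := hlow
  refine le_antisymm (Finset.sup_le fun β hβ => not_lt.mp fun h => ?_) ?_
  · exact (mem_filter.mp hβ).2 (hhigh β h)
  · exact le_sup (mem_filter.mpr ⟨mem_univ _, hα⟩)

theorem lt_two_mul_two_pow_log (n : ℕ) : n < 2 * 2 ^ Nat.log 2 n := by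
  simpa [pow_succ, mul_comm] using Nat.lt_pow_succ_log_self one_lt_two n

theorem anf_majF_eq_zero {n : ℕ} {α : Fin n → ZMod 2} (h : 2 ^ Nat.log 2 n < wtv α) :
    anf (majF n) α = 0 := by
  have hnm := lt_two_mul_two_pow_log n
  have hwn : wtv α ≤ n := (card_le_univ _).trans_eq (Fintype.card_fin n)
  obtain ⟨s, hs⟩ : ∃ s, wtv α = 2 ^ Nat.log 2 n + s + 1 := ⟨wtv α - 2 ^ Nat.log 2 n - 1, by omega⟩
  rw [anf_majF hs, Nat.cast_choose_pow_add_of_lt _ _ (by omega),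
    Nat.choose_eq_zero_of_lt (by omega), Nat.cast_zero]

theorem anf_majF_ne_zero {n : ℕ} {α : Fin n → ZMod 2} (h : wtv α = 2 ^ Nat.log 2 n) :
    anf (majF n) α ≠ 0 := by
  have hnm := lt_two_mul_two_pow_log n
  have hm : wtv α = (2 ^ Nat.log 2 n - 1) + 1 := by
    rw [h, Nat.sub_add_cancel Nat.one_le_two_pow]
  rw [anf_majF hm, Nat.cast_choose_pow_sub_one_of_lt _ (by omega)]
  exact pow_ne_zero _ (by decide)

/-- The algebraic degree of Maj_n is 2^⌊log₂ n⌋. -/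
theorem deg_maj (n : ℕ) (hn : 1 ≤ n) : degBF (majF n) = 2 ^ Nat.log 2 n := by
  obtain ⟨α, hα⟩ := exists_wtv_eq (Nat.pow_log_le_self 2 (Nat.one_le_iff_ne_zero.mp hn))
  exact degBF_eq_of_anf (fun _ => anf_majF_eq_zero) ⟨α, hα, anf_majF_ne_zero hα⟩
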